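/- Fix n ≥ 2 and 2 ≤ k ≤ n, and let B_n^k be the connected building set on [n] consisting of all singletons and all subsets of cardinality at least k. Then for every B_n^k-tree T, μ(T) = (k² − 2kn − k + n² + 3n − 2)/2. -/
import Mathlib


open scoped Classical

noncomputable section

/-- A rooted tree on the vertex set `S ⊆ ℕ`, encoded by its root and its parent
function; edges are directed away from the root (so each non-root vertex `i`
carries the edge `(i, parent i)`, with `parent i` closer to the root).  The
parent function is normalized to be the identity outside `S` and at the root. -/
structure RTree (S : Finset ℕ) where
  root : ℕ
  root_mem : root ∈ S
  parent : ℕ → ℕ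
  parent_out : ∀ i, i ∉ S → parent i = i
  parent_root : parent root = root
  parent_mem : ∀ i ∈ S, parent i ∈ S
  reach : ∀ i ∈ S, ∃ k, parent^[k] i = root

namespace RTree

variable {S : Finset ℕ}

/-- The set `T_{≤ i}` of descendants of `i` in `T` (including `i` itself). -/
def desc (T : RTree S) (i : ℕ) : Finset ℕ :=
  S.filter fun j => ∃ k, T.parent^[k] j = i

/-- The depth of a vertex: its distance to the root. -/
def dp (T : RTree S) (x : ℕ) : ℕ :=
  sInf {k | T.parent^[k] x = T.root}

/-- The depth of the tree: the maximal depth of a vertex. -/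
def depth (T : RTree S) : ℕ := S.sup T.dp

/-- The set of descent edges `(i, parent i)` with `i > parent i`, recorded by
the child endpoint `i`. -/
def desSet (T : RTree S) : Finset ℕ :=
  S.filter fun i => i ≠ T.root ∧ T.parent i < i

/-- The number of descents of `T`. -/
def des (T : RTree S) : ℕ := T.desSet.card

/-- The major index of `T`: the sum, over all descent edges `(i,j)` of `T`
(with `j = parent i`), of `depth T - dp j`, i.e. of the minimal rank of `j`. -/
def maj (T : RTree S) : ℕ :=
  ∑ i ∈ T.desSet, (T.depth - T.dp (T.parent i))

/-- The statistic `μ(T)`: the sum, over all edges `(i,j)` of `T`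
(with `j = parent i`), of `depth T - dp j`. -/
def mu (T : RTree S) : ℕ :=
  ∑ i ∈ S.filter (fun i => i ≠ T.root), (T.depth - T.dp (T.parent i))

end RTree

/-- `B` is a building set on the finite ground set `S`. -/
def IsBuildingSet (S : Finset ℕ) (B : Finset (Finset ℕ)) : Prop :=
  (∀ I ∈ B, I ⊆ S ∧ I.Nonempty) ∧
  (∀ I ∈ B, ∀ J ∈ B, (I ∩ J).Nonempty → I ∪ J ∈ B) ∧
  (∀ i ∈ S, ({i} : Finset ℕ) ∈ B)

/-- `B` is a connected building set on `S`. -/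
def IsConnBuildingSet (S : Finset ℕ) (B : Finset (Finset ℕ)) : Prop :=
  IsBuildingSet S B ∧ S ∈ B

/-- `T` is a `B`-tree: all descendant sets belong to `B`, and no union of
descendant sets of `k ≥ 2` pairwise incomparable nodes belongs to `B`. -/
def IsBTree (S : Finset ℕ) (B : Finset (Finset ℕ)) (T : RTree S) : Prop :=
  (∀ i ∈ S, T.desc i ∈ B) ∧
  ∀ I : Finset ℕ, I ⊆ S → 2 ≤ I.card →
    (∀ i ∈ I, ∀ j ∈ I, i ≠ j → i ∉ T.desc j ∧ j ∉ T.desc i) →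
    I.biUnion T.desc ∉ B


namespace RTree
variable {S : Finset ℕ} (T : RTree S)

lemma iterate_mem {i : ℕ} (hi : i ∈ S) (m : ℕ) : T.parent^[m] i ∈ S := by
  induction m with
  | zero => simpa
  | succ m ih => rw [Function.iterate_succ_apply']; exact T.parent_mem _ ih

lemma iterate_root (m : ℕ) : T.parent^[m] T.root = T.root := by
  induction m with
  | zero => rfl
  | succ m ih => rw [Function.iterate_succ_apply', ih, T.parent_root]

lemma dp_spec {i : ℕ} (hi : i ∈ S) : T.parent^[T.dp i] i = T.root := by
  have : {k | T.parent^[k] i = T.root}.Nonempty := T.reach i hi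
  exact Nat.sInf_mem this

lemma dp_min {i m : ℕ} (h : T.parent^[m] i = T.root) : T.dp i ≤ m :=
  Nat.sInf_le h

lemma dp_root : T.dp T.root = 0 :=
  Nat.le_zero.mp (T.dp_min (by rfl))

lemma dp_eq_zero_iff {i : ℕ} (hi : i ∈ S) : T.dp i = 0 ↔ i = T.root := by
  constructor
  · intro h
    have := T.dp_spec hi
    rwa [h] at this
  · intro h; rw [h]; exact T.dp_root

lemma dp_parent {i : ℕ} (hi : i ∈ S) (hr : i ≠ T.root) :
    T.dp (T.parent i) + 1 = T.dp i := by
  have h1 : T.dp i ≤ T.dp (T.parent i) + 1 := by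
    apply T.dp_min
    rw [Function.iterate_succ_apply]
    exact T.dp_spec (T.parent_mem i hi)
  have h0 : 1 ≤ T.dp i := by
    rcases Nat.eq_zero_or_pos (T.dp i) with h | h
    · exact absurd ((T.dp_eq_zero_iff hi).mp h) hr
    · exact h
  have h2 : T.dp (T.parent i) ≤ T.dp i - 1 := by
    apply T.dp_min
    have := T.dp_spec hi
    have heq : T.dp i = (T.dp i - 1) + 1 := by omega
    rw [heq, Function.iterate_succ_apply] at this
    exact this
  omega

lemma dp_iterate {i : ℕ} (hiS : i ∈ S) (m : ℕ) :
    T.parent^[m] i = T.root ∨ T.dp (T.parent^[m] i) + m = T.dp i := by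
  induction m with
  | zero => right; simp
  | succ m ih =>
    rcases ih with h | h
    · left; rw [Function.iterate_succ_apply', h, T.parent_root]
    · by_cases hr : T.parent^[m] i = T.root
      · left; rw [Function.iterate_succ_apply', hr, T.parent_root]
      · right
        have hm : T.parent^[m] i ∈ S := T.iterate_mem hiS m
        have := T.dp_parent hm hr
        rw [Function.iterate_succ_apply']
        omega

lemma mem_desc {i j : ℕ} : i ∈ T.desc j ↔ i ∈ S ∧ ∃ m, T.parent^[m] i = j := by
  simp [desc]

lemma mem_desc_self {i : ℕ} (hi : i ∈ S) : i ∈ T.desc i :=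
  (T.mem_desc).mpr ⟨hi, 0, rfl⟩

lemma desc_subset (j : ℕ) : T.desc j ⊆ S := Finset.filter_subset _ _

lemma dp_lt_of_mem_desc {i j : ℕ} (h : i ∈ T.desc j) (hne : i ≠ j) :
    T.dp j < T.dp i := by
  rw [mem_desc] at h
  obtain ⟨hiS, m, hm⟩ := h
  have hm0 : m ≠ 0 := by rintro rfl; exact hne hm
  rcases T.dp_iterate hiS m with h | h
  · rw [hm] at h
    subst h
    rw [T.dp_root]
    have : T.dp i ≠ 0 := fun h0 => hne ((T.dp_eq_zero_iff hiS).mp h0)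
    omega
  · rw [hm] at h; omega

lemma desc_antisymm {i j : ℕ} (hij : i ∈ T.desc j) (hji : j ∈ T.desc i) : i = j := by
  by_contra hne
  have h1 := T.dp_lt_of_mem_desc hij hne
  have h2 := T.dp_lt_of_mem_desc hji (Ne.symm hne)
  omega

lemma desc_disjoint {i j : ℕ} (h1 : i ∉ T.desc j) (h2 : j ∉ T.desc i) :
    Disjoint (T.desc i) (T.desc j) := by
  rw [Finset.disjoint_left]
  intro x hxi hxj
  rw [mem_desc] at hxi hxj
  obtain ⟨hxS, a, ha⟩ := hxi
  obtain ⟨-, b, hb⟩ := hxj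
  rcases le_total a b with hab | hab
  · apply h1
    rw [mem_desc]
    refine ⟨by rw [← ha]; exact T.iterate_mem hxS a, b - a, ?_⟩
    rw [← hb, ← ha, ← Function.iterate_add_apply]
    congr 1; omega
  · apply h2
    rw [mem_desc]
    refine ⟨by rw [← hb]; exact T.iterate_mem hxS b, a - b, ?_⟩
    rw [← ha, ← hb, ← Function.iterate_add_apply]
    congr 1; omega

lemma desc_root : T.desc T.root = S := by
  apply Finset.Subset.antisymm (T.desc_subset _)
  intro i hi
  rw [mem_desc]
  exact ⟨hi, T.reach i hi⟩

lemma desc_subset_desc_parent {i : ℕ} : T.desc i ⊆ T.desc (T.parent i) := by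
  intro x hx
  rw [mem_desc] at hx ⊢
  obtain ⟨hxS, m, hm⟩ := hx
  exact ⟨hxS, m + 1, by rw [Function.iterate_succ_apply', hm]⟩

lemma exists_child {x j : ℕ} (hx : x ∈ T.desc j) (hne : x ≠ j) :
    ∃ c ∈ S, T.parent c = j ∧ c ≠ j ∧ x ∈ T.desc c := by
  rw [mem_desc] at hx
  obtain ⟨hxS, hm⟩ := hx
  have hm' : ∃ a, T.parent^[a] x = j := hm
  classical
  set a := Nat.find hm' with ha
  have hspec : T.parent^[a] x = j := Nat.find_spec hm'
  have ha0 : a ≠ 0 := by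
    rintro h
    rw [h] at hspec
    exact hne hspec
  refine ⟨T.parent^[a - 1] x, T.iterate_mem hxS _, ?_, ?_, ?_⟩
  · have h1 : T.parent^[a - 1 + 1] x = j := by
      have : a - 1 + 1 = a := by omega
      rw [this]; exact hspec
    rw [Function.iterate_succ_apply'] at h1
    exact h1
  · intro h
    have := Nat.find_min hm' (m := a - 1) (by omega)
    exact this h
  · rw [mem_desc]; exact ⟨hxS, a - 1, rfl⟩

lemma dp_le_depth {i : ℕ} (hi : i ∈ S) : T.dp i ≤ T.depth :=
  Finset.le_sup hi

lemma exists_dp_eq {i : ℕ} (hi : i ∈ S) {e : ℕ} (he : e ≤ T.dp i) :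
    ∃ j ∈ S, T.dp j = e := by
  rcases Nat.eq_zero_or_pos e with rfl | hpos
  · exact ⟨T.root, T.root_mem, T.dp_root⟩
  · refine ⟨T.parent^[T.dp i - e] i, T.iterate_mem hi _, ?_⟩
    rcases T.dp_iterate hi (T.dp i - e) with h | h
    · have := T.dp_min h
      omega
    · omega



lemma notMem_desc_of_dp_eq {i j : ℕ} (hne : i ≠ j) (hdp : T.dp i = T.dp j) :
    i ∉ T.desc j := by
  intro h
  have := T.dp_lt_of_mem_desc h hne
  omega

lemma mem_desc_parent {i : ℕ} (hi : i ∈ S) : i ∈ T.desc (T.parent i) :=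
  T.mem_desc.mpr ⟨hi, 1, by simp⟩

lemma child_facts {c v : ℕ} (hc : c ∈ S) (hp : T.parent c = v) (hne : c ≠ v) :
    c ≠ T.root ∧ T.dp c = T.dp v + 1 ∧ c ∈ T.desc v ∧ T.desc c ⊆ T.desc v ∧
      v ∉ T.desc c := by
  have hroot : c ≠ T.root := by
    rintro rfl
    rw [T.parent_root] at hp
    exact hne hp
  have hdp := T.dp_parent hc hroot
  rw [hp] at hdp
  have hcv : c ∈ T.desc v := T.mem_desc.mpr ⟨hc, 1, by simpa using hp⟩
  have hsub : T.desc c ⊆ T.desc v := hp ▸ T.desc_subset_desc_parent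
  have hvn : v ∉ T.desc c := fun h => hne (T.desc_antisymm hcv h)
  exact ⟨hroot, by omega, hcv, hsub, hvn⟩

end RTree


section BnkAux

open Finset

variable {n k : ℕ} {B : Finset (Finset ℕ)} {T : RTree (Finset.Icc 1 n)}

lemma mem_B_iff
    (hB : B = (Finset.Icc 1 n).image (fun i => ({i} : Finset ℕ)) ∪
        ((Finset.Icc 1 n).powerset.filter fun I => k ≤ I.card)) {I : Finset ℕ} :
    I ∈ B ↔ (∃ i ∈ Finset.Icc 1 n, I = {i}) ∨ (I ⊆ Finset.Icc 1 n ∧ k ≤ I.card) := by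
  subst hB
  simp [Finset.mem_union, Finset.mem_image, Finset.mem_filter, Finset.mem_powerset, eq_comm]

lemma card_desc (hB : B = (Finset.Icc 1 n).image (fun i => ({i} : Finset ℕ)) ∪
        ((Finset.Icc 1 n).powerset.filter fun I => k ≤ I.card))
    (hT : IsBTree (Finset.Icc 1 n) B T) {i : ℕ} (hi : i ∈ Finset.Icc 1 n) :
    (T.desc i).card = 1 ∨ k ≤ (T.desc i).card := by
  have := hT.1 i hi
  rw [mem_B_iff hB] at this
  rcases this with ⟨j, -, hj⟩ | ⟨-, h⟩
  · left; rw [hj]; simp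
  · right; exact h

lemma desc_eq_singleton_of_card_one {i : ℕ} (hi : i ∈ Finset.Icc 1 n)
    (h : (T.desc i).card = 1) : T.desc i = {i} := by
  obtain ⟨a, ha⟩ := Finset.card_eq_one.mp h
  have := T.mem_desc_self hi
  rw [ha] at this ⊢
  rw [Finset.mem_singleton] at this
  rw [this]

lemma pair_leaves (hk2 : 2 ≤ k)
    (hB : B = (Finset.Icc 1 n).image (fun i => ({i} : Finset ℕ)) ∪
        ((Finset.Icc 1 n).powerset.filter fun I => k ≤ I.card))
    (hT : IsBTree (Finset.Icc 1 n) B T) {i j : ℕ}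
    (hi : i ∈ Finset.Icc 1 n) (hj : j ∈ Finset.Icc 1 n) (hne : i ≠ j)
    (h1 : i ∉ T.desc j) (h2 : j ∉ T.desc i) :
    T.desc i = {i} ∧ T.desc j = {j} := by
  have hunion : ({i, j} : Finset ℕ).biUnion T.desc = T.desc i ∪ T.desc j := by
    simp [Finset.biUnion_insert]
  have hcard2 : ({i, j} : Finset ℕ).card = 2 := by
    rw [Finset.card_insert_of_notMem (by simpa using hne), Finset.card_singleton]
  have hnotB := hT.2 {i, j} (by
      intro x hx
      simp only [Finset.mem_insert, Finset.mem_singleton] at hx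
      rcases hx with rfl | rfl <;> assumption)
    (by omega)
    (by
      intro a ha b hb hab
      simp only [Finset.mem_insert, Finset.mem_singleton] at ha hb
      rcases ha with rfl | rfl <;> rcases hb with rfl | rfl <;>
        first | exact absurd rfl hab | exact ⟨h1, h2⟩ | exact ⟨h2, h1⟩)
  rw [hunion, mem_B_iff hB] at hnotB
  have hdisj := T.desc_disjoint h1 h2
  have hcard : (T.desc i ∪ T.desc j).card = (T.desc i).card + (T.desc j).card :=
    Finset.card_union_of_disjoint hdisj
  have hi1 : 1 ≤ (T.desc i).card := Finset.card_pos.mpr ⟨i, T.mem_desc_self hi⟩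
  have hj1 : 1 ≤ (T.desc j).card := Finset.card_pos.mpr ⟨j, T.mem_desc_self hj⟩
  have hlt : (T.desc i).card + (T.desc j).card < k := by
    by_contra hge
    apply hnotB
    right
    exact ⟨Finset.union_subset (T.desc_subset _) (T.desc_subset _), by omega⟩
  have hci := card_desc hB hT hi
  have hcj := card_desc hB hT hj
  have hci1 : (T.desc i).card = 1 := by omega
  have hcj1 : (T.desc j).card = 1 := by omega
  exact ⟨desc_eq_singleton_of_card_one hi hci1, desc_eq_singleton_of_card_one hj hcj1⟩

lemma antichain_card_lt (hk2 : 2 ≤ k)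
    (hB : B = (Finset.Icc 1 n).image (fun i => ({i} : Finset ℕ)) ∪
        ((Finset.Icc 1 n).powerset.filter fun I => k ≤ I.card))
    (hT : IsBTree (Finset.Icc 1 n) B T) {I : Finset ℕ}
    (hIS : I ⊆ Finset.Icc 1 n) (hI2 : 2 ≤ I.card)
    (hinc : ∀ i ∈ I, ∀ j ∈ I, i ≠ j → i ∉ T.desc j ∧ j ∉ T.desc i) :
    I.card < k := by
  have hsing : ∀ i ∈ I, T.desc i = {i} := by
    intro i hi
    obtain ⟨j, hj, hji⟩ := Finset.exists_mem_ne (s := I) (by omega) i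
    have h := hinc i hi j hj (Ne.symm hji)
    exact (pair_leaves hk2 hB hT (hIS hi) (hIS hj) (Ne.symm hji) h.1 h.2).1
  have hbi : I.biUnion T.desc = I := by
    ext x
    simp only [Finset.mem_biUnion]
    constructor
    · rintro ⟨i, hi, hx⟩
      rw [hsing i hi, Finset.mem_singleton] at hx
      rwa [hx]
    · intro hx
      exact ⟨x, hx, by rw [hsing x hx]; simp⟩
  have hnotB := hT.2 I hIS hI2 hinc
  rw [hbi, mem_B_iff hB] at hnotB
  by_contra hge
  have hk' : k ≤ I.card := by omega
  exact hnotB (Or.inr ⟨hIS, hk'⟩)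


lemma child_desc_singleton (hk2 : 2 ≤ k)
    (hB : B = (Finset.Icc 1 n).image (fun i => ({i} : Finset ℕ)) ∪
        ((Finset.Icc 1 n).powerset.filter fun I => k ≤ I.card))
    (hT : IsBTree (Finset.Icc 1 n) B T) {v c c' : ℕ}
    (hcS : c ∈ Finset.Icc 1 n) (hpc : T.parent c = v) (hcv : c ≠ v)
    (hc'S : c' ∈ Finset.Icc 1 n) (hpc' : T.parent c' = v) (hc'v : c' ≠ v)
    (hne : c ≠ c') : T.desc c = {c} := by
  have h1 := (T.child_facts hcS hpc hcv).2.1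
  have h2 := (T.child_facts hc'S hpc' hc'v).2.1
  have hdp : T.dp c = T.dp c' := by omega
  have hi1 : c ∉ T.desc c' := T.notMem_desc_of_dp_eq hne hdp
  have hi2 : c' ∉ T.desc c := T.notMem_desc_of_dp_eq (Ne.symm hne) hdp.symm
  exact (pair_leaves hk2 hB hT hcS hc'S hne hi1 hi2).1

lemma unique_child (hk2 : 2 ≤ k)
    (hB : B = (Finset.Icc 1 n).image (fun i => ({i} : Finset ℕ)) ∪
        ((Finset.Icc 1 n).powerset.filter fun I => k ≤ I.card))
    (hT : IsBTree (Finset.Icc 1 n) B T) {v : ℕ}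
    (hbig : k + 1 ≤ (T.desc v).card) {c c' : ℕ}
    (hcS : c ∈ Finset.Icc 1 n) (hpc : T.parent c = v) (hcv : c ≠ v)
    (hc'S : c' ∈ Finset.Icc 1 n) (hpc' : T.parent c' = v) (hc'v : c' ≠ v) :
    c' = c := by
  by_contra hne
  -- every child of v has singleton descendant set
  have hsing : ∀ w ∈ Finset.Icc 1 n, T.parent w = v → w ≠ v → T.desc w = {w} := by
    intro w hwS hpw hwv
    by_cases hwc : w = c
    · subst hwc
      exact child_desc_singleton hk2 hB hT hwS hpw hwv hc'S hpc' hc'v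
        (fun h => hne (h.symm))
    · exact child_desc_singleton hk2 hB hT hwS hpw hwv hcS hpc hcv hwc
  set C : Finset ℕ := (Finset.Icc 1 n).filter (fun w => T.parent w = v ∧ w ≠ v) with hC
  have hcC : c ∈ C := by simp [hC, hcS, hpc, hcv]
  have hc'C : c' ∈ C := by simp [hC, hc'S, hpc', hc'v]
  have hCsub : C ⊆ Finset.Icc 1 n := Finset.filter_subset _ _
  have hC2 : 2 ≤ C.card := by
    have : ({c', c} : Finset ℕ) ⊆ C := by
      intro x hx
      simp only [Finset.mem_insert, Finset.mem_singleton] at hx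
      rcases hx with rfl | rfl <;> assumption
    have hle := Finset.card_le_card this
    rwa [Finset.card_insert_of_notMem (by simpa using hne), Finset.card_singleton] at hle
  have hinc : ∀ i ∈ C, ∀ j ∈ C, i ≠ j → i ∉ T.desc j ∧ j ∉ T.desc i := by
    intro i hi j hj hij
    simp only [hC, Finset.mem_filter] at hi hj
    have d1 := (T.child_facts hi.1 hi.2.1 hi.2.2).2.1
    have d2 := (T.child_facts hj.1 hj.2.1 hj.2.2).2.1
    have hdp : T.dp i = T.dp j := by omega
    exact ⟨T.notMem_desc_of_dp_eq hij hdp, T.notMem_desc_of_dp_eq (Ne.symm hij) hdp.symm⟩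
  have hClt : C.card < k := antichain_card_lt hk2 hB hT hCsub hC2 hinc
  -- desc v ⊆ insert v C
  have hsub : T.desc v ⊆ insert v C := by
    intro y hy
    by_cases hyv : y = v
    · simp [hyv]
    · obtain ⟨cy, hcyS, hpcy, hcyv, hycy⟩ := T.exists_child hy hyv
      have := hsing cy hcyS hpcy hcyv
      rw [this, Finset.mem_singleton] at hycy
      subst hycy
      simp only [Finset.mem_insert]
      right
      simp [hC, hcyS, hpcy, hcyv]
  have := Finset.card_le_card hsub
  have hins : (insert v C).card ≤ C.card + 1 := Finset.card_insert_le _ _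
  omega

lemma chain (hn : 2 ≤ n) (hk2 : 2 ≤ k) (hkn : k ≤ n)
    (hB : B = (Finset.Icc 1 n).image (fun i => ({i} : Finset ℕ)) ∪
        ((Finset.Icc 1 n).powerset.filter fun I => k ≤ I.card))
    (hT : IsBTree (Finset.Icc 1 n) B T) :
    ∀ d, d ≤ n - k → ∃ v ∈ Finset.Icc 1 n, T.dp v = d ∧ (T.desc v).card = n - d ∧
      ∀ w ∈ Finset.Icc 1 n, T.dp w = d → w = v := by
  intro d
  induction d with
  | zero =>
    intro _
    refine ⟨T.root, T.root_mem, T.dp_root, ?_, ?_⟩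
    · rw [T.desc_root]; simp
    · intro w hw hdw
      exact (T.dp_eq_zero_iff hw).mp hdw
  | succ d ih =>
    intro hd
    obtain ⟨v, hvS, hvdp, hvcard, hvuniq⟩ := ih (by omega)
    have hbig : k + 1 ≤ (T.desc v).card := by omega
    obtain ⟨x, hx, hxv⟩ := Finset.exists_mem_ne (s := T.desc v) (by omega) v
    obtain ⟨c, hcS, hpc, hcv, hxc⟩ := T.exists_child hx hxv
    obtain ⟨hcroot, hcdp, hcdesc, hcsub, hvnot⟩ := T.child_facts hcS hpc hcv
    have huc : ∀ c' ∈ Finset.Icc 1 n, T.parent c' = v → c' ≠ v → c' = c := by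
      intro c' h1 h2 h3
      exact unique_child hk2 hB hT hbig hcS hpc hcv h1 h2 h3
    have hdesc : T.desc v = insert v (T.desc c) := by
      apply Finset.Subset.antisymm
      · intro y hy
        by_cases hyv : y = v
        · simp [hyv]
        · obtain ⟨cy, hcyS, hpcy, hcyv, hycy⟩ := T.exists_child hy hyv
          have : cy = c := huc cy hcyS hpcy hcyv
          subst this
          exact Finset.mem_insert_of_mem hycy
      · intro y hy
        rcases Finset.mem_insert.mp hy with rfl | hy'
        · exact T.mem_desc_self hvS
        · exact hcsub hy'
    have hccard : (T.desc c).card = n - (d + 1) := by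
      have := hdesc ▸ Finset.card_insert_of_notMem hvnot
      omega
    refine ⟨c, hcS, by omega, hccard, ?_⟩
    intro w hwS hwdp
    have hwroot : w ≠ T.root := by
      intro h
      rw [h, T.dp_root] at hwdp
      omega
    have hdpw := T.dp_parent hwS hwroot
    have hpwS := T.parent_mem w hwS
    have hpw : T.parent w = v := hvuniq _ hpwS (by omega)
    have hwv : w ≠ v := by
      intro h
      rw [h, hvdp] at hwdp
      omega
    exact huc w hwS hpw hwv


lemma gauss_aux : ∀ m : ℕ, 2 * ∑ d ∈ Finset.Icc 1 m, (m + 2 - d) = m * m + 3 * m := by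
  intro m
  induction m with
  | zero => simp
  | succ m ih =>
    rw [Finset.sum_Icc_succ_top (by omega : 1 ≤ m + 1)]
    have h1 : ∑ d ∈ Finset.Icc 1 m, (m + 1 + 2 - d) =
        (∑ d ∈ Finset.Icc 1 m, (m + 2 - d)) + m := by
      have hc : ∀ d ∈ Finset.Icc 1 m, m + 1 + 2 - d = (m + 2 - d) + 1 := by
        intro d hd
        rw [Finset.mem_Icc] at hd
        omega
      rw [Finset.sum_congr rfl hc, Finset.sum_add_distrib, Finset.sum_const, Nat.card_Icc]
      simp
    rw [h1]
    have h2 : m + 1 + 2 - (m + 1) = 2 := by omega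
    rw [h2]
    have hexp : (m + 1) * (m + 1) + 3 * (m + 1) = m * m + 5 * m + 4 := by ring
    rw [hexp]
    linarith [ih]

end BnkAux

/-- For `2 ≤ k ≤ n`, every `B_n^k`-tree `T` satisfies
`μ(T) = (k² − 2kn − k + n² + 3n − 2)/2` (stated with denominators cleared). -/
theorem Bnk_mu_value
    (n k : ℕ) (hn : 2 ≤ n) (hk2 : 2 ≤ k) (hkn : k ≤ n)
    (B : Finset (Finset ℕ))
    (hB : B = (Finset.Icc 1 n).image (fun i => ({i} : Finset ℕ)) ∪
        ((Finset.Icc 1 n).powerset.filter fun I => k ≤ I.card))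
    (T : RTree (Finset.Icc 1 n)) (hT : IsBTree (Finset.Icc 1 n) B T) :
    2 * (T.mu : ℤ) =
      (k : ℤ) ^ 2 - 2 * k * n - k + (n : ℤ) ^ 2 + 3 * n - 2 := by
  have hn1 : 1 ≤ n := by omega
  obtain ⟨v, hvS, hvdp, hvcard, hvuniq⟩ := chain hn hk2 hkn hB hT (n - k) le_rfl
  have hvcard' : (T.desc v).card = k := by omega
  have hchild : ∀ y ∈ T.desc v, y ≠ v → T.parent y = v ∧ T.desc y = {y} := by
    intro y hy hyv
    obtain ⟨c, hcS, hpc, hcv, hyc⟩ := T.exists_child hy hyv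
    have hcfacts := T.child_facts hcS hpc hcv
    have hss : T.desc c ⊂ T.desc v :=
      ⟨hcfacts.2.2.2.1, fun h => hcfacts.2.2.2.2 (h (T.mem_desc_self hvS))⟩
    have hlt : (T.desc c).card < k := by
      have := Finset.card_lt_card hss
      omega
    have hcd := card_desc hB hT hcS
    have hone : (T.desc c).card = 1 := by omega
    have hsing := desc_eq_singleton_of_card_one hcS hone
    rw [hsing, Finset.mem_singleton] at hyc
    subst hyc
    exact ⟨hpc, hsing⟩
  have hchdp : ∀ y ∈ T.desc v, y ≠ v → T.dp y = n - k + 1 := by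
    intro y hy hyv
    have h := hchild y hy hyv
    have := (T.child_facts (T.desc_subset v hy) h.1 hyv).2.1
    omega
  have hfibtop : (Finset.Icc 1 n).filter (fun i => T.dp i = n - k + 1) =
      (T.desc v).erase v := by
    ext w
    simp only [Finset.mem_filter, Finset.mem_erase]
    constructor
    · rintro ⟨hwS, hwdp⟩
      have hwroot : w ≠ T.root := by
        intro h; rw [h, T.dp_root] at hwdp; omega
      have hdpw := T.dp_parent hwS hwroot
      have hpwS := T.parent_mem w hwS
      have hpw : T.parent w = v := hvuniq _ hpwS (by omega)
      have hwv : w ≠ v := by intro h; rw [h, hvdp] at hwdp; omega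
      exact ⟨hwv, (T.child_facts hwS hpw hwv).2.2.1⟩
    · rintro ⟨hwv, hw⟩
      exact ⟨T.desc_subset v hw, hchdp w hw hwv⟩
  have hfibtopcard :
      ((Finset.Icc 1 n).filter (fun i => T.dp i = n - k + 1)).card = k - 1 := by
    rw [hfibtop, Finset.card_erase_of_mem (T.mem_desc_self hvS), hvcard']
  have hdple : ∀ i ∈ Finset.Icc 1 n, T.dp i ≤ n - k + 1 := by
    intro i hi
    by_contra hgt
    obtain ⟨j, hjS, hjdp⟩ := T.exists_dp_eq hi (e := n - k + 2) (by omega)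
    have hjroot : j ≠ T.root := by intro h; rw [h, T.dp_root] at hjdp; omega
    have hdpj := T.dp_parent hjS hjroot
    have hpjS := T.parent_mem j hjS
    have hpj : T.parent j ∈ (Finset.Icc 1 n).filter (fun i => T.dp i = n - k + 1) := by
      simp only [Finset.mem_filter]
      exact ⟨hpjS, by omega⟩
    rw [hfibtop, Finset.mem_erase] at hpj
    have hps := (hchild _ hpj.2 hpj.1).2
    have hjmem : j ∈ T.desc (T.parent j) := T.mem_desc_parent hjS
    rw [hps, Finset.mem_singleton] at hjmem
    rw [← hjmem] at hdpj
    omega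
  have hLne : ((Finset.Icc 1 n).filter (fun i => T.dp i = n - k + 1)).Nonempty := by
    rw [← Finset.card_pos, hfibtopcard]; omega
  obtain ⟨y0, hy0⟩ := hLne
  rw [Finset.mem_filter] at hy0
  have hdepth : T.depth = n - k + 1 := by
    apply le_antisymm
    · exact Finset.sup_le hdple
    · rw [← hy0.2]; exact Finset.le_sup hy0.1
  have hfiblow : ∀ d ≤ n - k,
      ((Finset.Icc 1 n).filter (fun i => T.dp i = d)).card = 1 := by
    intro d hd
    obtain ⟨u, huS, hudp, -, huuniq⟩ := chain hn hk2 hkn hB hT d hd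
    rw [Finset.card_eq_one]
    refine ⟨u, ?_⟩
    ext x
    simp only [Finset.mem_filter, Finset.mem_singleton]
    constructor
    · rintro ⟨hxS, hxdp⟩; exact huuniq x hxS hxdp
    · rintro rfl; exact ⟨huS, hudp⟩
  set F := (Finset.Icc 1 n).filter (fun i => i ≠ T.root) with hF
  have hterm : ∀ i ∈ F, T.depth - T.dp (T.parent i) = n - k + 2 - T.dp i := by
    intro i hi
    rw [hF, Finset.mem_filter] at hi
    have h1 := T.dp_parent hi.1 hi.2
    have h2 := hdple i hi.1
    rw [hdepth]
    omega
  have hmu1 : T.mu = ∑ i ∈ F, (n - k + 2 - T.dp i) := by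
    rw [RTree.mu]
    exact Finset.sum_congr rfl hterm
  have hmaps : ∀ i ∈ F, T.dp i ∈ Finset.Icc 1 (n - k + 1) := by
    intro i hi
    rw [hF, Finset.mem_filter] at hi
    rw [Finset.mem_Icc]
    have h2 := hdple i hi.1
    have h0 : T.dp i ≠ 0 := fun h => hi.2 ((T.dp_eq_zero_iff hi.1).mp h)
    omega
  have hfw := Finset.sum_fiberwise_of_maps_to hmaps (fun i => n - k + 2 - T.dp i)
  have hfeq : ∀ d ∈ Finset.Icc 1 (n - k + 1), F.filter (fun i => T.dp i = d) =
      (Finset.Icc 1 n).filter (fun i => T.dp i = d) := by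
    intro d hd
    rw [Finset.mem_Icc] at hd
    rw [hF, Finset.filter_filter]
    apply Finset.filter_congr
    intro x hx
    constructor
    · exact fun h => h.2
    · intro h
      refine ⟨fun hr => ?_, h⟩
      rw [hr, T.dp_root] at h
      omega
  have hinner : ∀ d ∈ Finset.Icc 1 (n - k + 1),
      (∑ i ∈ F.filter (fun i => T.dp i = d), (n - k + 2 - T.dp i)) =
      ((Finset.Icc 1 n).filter (fun i => T.dp i = d)).card * (n - k + 2 - d) := by
    intro d hd
    have hcg : ∀ i ∈ (Finset.Icc 1 n).filter (fun i => T.dp i = d),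
        n - k + 2 - T.dp i = n - k + 2 - d := by
      intro i hi
      rw [Finset.mem_filter] at hi
      rw [hi.2]
    rw [hfeq d hd, Finset.sum_congr rfl hcg, Finset.sum_const, smul_eq_mul]
  have hmu2 : T.mu = ∑ d ∈ Finset.Icc 1 (n - k + 1),
      ((Finset.Icc 1 n).filter (fun i => T.dp i = d)).card * (n - k + 2 - d) := by
    rw [hmu1, ← hfw]
    exact Finset.sum_congr rfl hinner
  have hsplit := Finset.sum_Icc_succ_top (a := 1) (b := n - k)
    (f := fun d => ((Finset.Icc 1 n).filter (fun i => T.dp i = d)).card * (n - k + 2 - d))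
    (by omega)
  have hlowsum : ∑ d ∈ Finset.Icc 1 (n - k),
      ((Finset.Icc 1 n).filter (fun i => T.dp i = d)).card * (n - k + 2 - d) =
      ∑ d ∈ Finset.Icc 1 (n - k), (n - k + 2 - d) := by
    apply Finset.sum_congr rfl
    intro d hd
    rw [Finset.mem_Icc] at hd
    rw [hfiblow d hd.2, one_mul]
  have htop : ((Finset.Icc 1 n).filter (fun i => T.dp i = n - k + 1)).card *
      (n - k + 2 - (n - k + 1)) = k - 1 := by
    rw [hfibtopcard]
    have h1 : n - k + 2 - (n - k + 1) = 1 := by omega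
    rw [h1, mul_one]
  have hmu3 : T.mu = (∑ d ∈ Finset.Icc 1 (n - k), (n - k + 2 - d)) + (k - 1) := by
    rw [hmu2, hsplit, hlowsum, htop]
  have hg := gauss_aux (n - k)
  have h2mu : 2 * T.mu = (n - k) * (n - k) + 3 * (n - k) + 2 * (k - 1) := by
    rw [hmu3, Nat.mul_add, hg]
  have hcast := congrArg (fun t : ℕ => (t : ℤ)) h2mu
  push_cast [Nat.cast_sub hkn, Nat.cast_sub (by omega : 1 ≤ k)] at hcast
  linear_combination hcast
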